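/- arXiv:2312.13609 — 2 statements merged into one kernel-verified Lean document; each statement's English description precedes it below -/
import Mathlib

section
/- Let K(a_{n,k}) be a Köthe space and Λ₁(β) a power series space of finite type. Let θ be a sequence with θ_0 ≠ 0. The lower triangular Toeplitz operator T̂_θ : K(a_{n,k}) → Λ₁(β) is continuous if and only if θ ∈ Λ₁(β) and for every k ∈ ℕ there exist m ∈ ℕ and C > 0 such that e^{-β_n/k} ≤ C a_{n,m} for all n ∈ ℕ. -/
open scoped BigOperators
noncomputable section

/-- A Köthe matrix: non-negative entries, each row eventually positive,
rows non-decreasing in the second index. -/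
structure IsKotheMatrix (a : ℕ → ℕ → ℝ) : Prop where
  nonneg : ∀ n k, 0 ≤ a n k
  pos : ∀ n, ∃ k, 0 < a n k
  mono : ∀ n k, a n k ≤ a n (k + 1)

/-- Membership in the Köthe space `K(a)`. -/
def InKothe (a : ℕ → ℕ → ℝ) (x : ℕ → ℝ) : Prop :=
  ∀ k, Summable fun n => |x n| * a n k

/-- The `k`-th seminorm of the Köthe space `K(a)`. -/
def kNorm (a : ℕ → ℕ → ℝ) (k : ℕ) (x : ℕ → ℝ) : ℝ :=
  ∑' n, |x n| * a n k

/-- Grothendieck–Pietsch nuclearity criterion for a Köthe space. -/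
def IsNuclearKothe (a : ℕ → ℕ → ℝ) : Prop :=
  ∀ k, ∃ l, k < l ∧ Summable fun n => a n k / a n l

/-- The `n`-th unit vector. -/
def unitVec (n : ℕ) : ℕ → ℝ := fun j => if j = n then 1 else 0

/-- Weight of the finite type power series space `Λ₁(β)`. -/
def finW (β : ℕ → ℝ) (k : ℕ) (n : ℕ) : ℝ := Real.exp (-(β n) / (k : ℝ))

/-- Weight of the infinite type power series space `Λ_∞(β)`. -/
def infW (β : ℕ → ℝ) (k : ℕ) (n : ℕ) : ℝ := Real.exp ((k : ℝ) * β n)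

/-- The `k`-th seminorm of `Λ₁(β)` (for `0 < k`). -/
def finNorm (β : ℕ → ℝ) (k : ℕ) (x : ℕ → ℝ) : ℝ := ∑' n, |x n| * finW β k n

/-- The `k`-th seminorm of `Λ_∞(β)`. -/
def infNorm (β : ℕ → ℝ) (k : ℕ) (x : ℕ → ℝ) : ℝ := ∑' n, |x n| * infW β k n

/-- Membership in `Λ₁(β)`. -/
def memFin (β : ℕ → ℝ) (x : ℕ → ℝ) : Prop :=
  ∀ k : ℕ, 0 < k → Summable fun n => |x n| * finW β k n

/-- Membership in `Λ_∞(β)`. -/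
def memInf (β : ℕ → ℝ) (x : ℕ → ℝ) : Prop :=
  ∀ k : ℕ, 0 < k → Summable fun n => |x n| * infW β k n

/-- Lower triangular Toeplitz operator `T̂_θ`, `T̂_θ e_n = ∑_{j ≥ n} θ_{j-n} e_j`. -/
def hatT (θ : ℕ → ℝ) (x : ℕ → ℝ) : ℕ → ℝ :=
  fun j => ∑ i ∈ Finset.range (j + 1), θ (j - i) * x i

/-- Upper triangular Toeplitz operator `Ť_θ`, `Ť_θ e_n = ∑_{j ≤ n} θ_{n-j} e_j`. -/
def checkT (θ : ℕ → ℝ) (x : ℕ → ℝ) : ℕ → ℝ :=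
  fun j => ∑' i, θ i * x (j + i)

/-- Operator defined by a matrix acting on sequences. -/
def matOp (t : ℕ → ℕ → ℝ) (x : ℕ → ℝ) : ℕ → ℝ :=
  fun j => ∑' n, t j n * x n

/-- The growth condition (3.5): `β_s ≤ M (β_{s-t} + β_t)` for all `s > t`. -/
def GrowthCond (β : ℕ → ℝ) (M : ℕ) : Prop :=
  ∀ t s : ℕ, t < s → β s ≤ (M : ℝ) * (β (s - t) + β t)

/-!
Testing on unit vectors shows that continuity forces `θ = T̂_θ e_0 ∈ Λ₁(β)` and, since the
`n`-th coordinate of `T̂_θ e_n` is `θ_0 ≠ 0`, the domination `e^{-β_n/k} ≤ C a_{n,m}`.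
Conversely, monotonicity of `β` gives `e^{-β_j/k} ≤ e^{-β_{j-i}/2k} e^{-β_i/2k}` for `i ≤ j`,
so `‖T̂_θ x‖_k ≤ ‖θ‖_{2k} ‖x‖_{2k}` by the Cauchy product formula, and the domination at level
`2k` bounds `‖x‖_{2k}` by a multiple of a Köthe seminorm.
-/

open Finset

lemma finW_nonneg (β : ℕ → ℝ) (k n : ℕ) : 0 ≤ finW β k n := (Real.exp_pos _).le

lemma finW_le_finW_two_mul_sub_mul {β : ℕ → ℝ} (hβ : Monotone β) (k : ℕ) {i j : ℕ}
    (hij : i ≤ j) : finW β k j ≤ finW β (2 * k) (j - i) * finW β (2 * k) i := by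
  have hsum : β (j - i) + β i ≤ 2 * β j := by linarith [hβ (Nat.sub_le j i), hβ hij]
  unfold finW
  rw [← Real.exp_add, Real.exp_le_exp, ← add_div, Nat.cast_mul, Nat.cast_ofNat,
    ← mul_div_mul_left (-β j) (k : ℝ) two_ne_zero]
  exact div_le_div_of_nonneg_right (by linarith) (by positivity)

section Convolution

variable {w u : ℕ → ℝ}

lemma abs_hatT_mul_le_sum (hw : ∀ n, 0 ≤ w n) (hwu : ∀ i j, i ≤ j → w j ≤ u (j - i) * u i)
    (θ x : ℕ → ℝ) (j : ℕ) :
    |hatT θ x j| * w j ≤ ∑ i ∈ range (j + 1), |x i| * u i * (|θ (j - i)| * u (j - i)) :=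
  calc |hatT θ x j| * w j
      ≤ (∑ i ∈ range (j + 1), |θ (j - i) * x i|) * w j :=
        mul_le_mul_of_nonneg_right (abs_sum_le_sum_abs _ _) (hw j)
    _ = ∑ i ∈ range (j + 1), |θ (j - i) * x i| * w j := sum_mul _ _ _
    _ ≤ ∑ i ∈ range (j + 1), |x i| * u i * (|θ (j - i)| * u (j - i)) := by
        refine sum_le_sum fun i hi => ?_
        calc |θ (j - i) * x i| * w j
            ≤ |θ (j - i) * x i| * (u (j - i) * u i) :=
              mul_le_mul_of_nonneg_left (hwu i j (Nat.lt_succ_iff.mp (mem_range.mp hi)))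
                (abs_nonneg _)
          _ = |x i| * u i * (|θ (j - i)| * u (j - i)) := by rw [abs_mul]; ring

lemma summable_hatT_mul_and_tsum_le (hw : ∀ n, 0 ≤ w n) (hu : ∀ n, 0 ≤ u n)
    (hwu : ∀ i j, i ≤ j → w j ≤ u (j - i) * u i) {θ x : ℕ → ℝ}
    (hθ : Summable fun n => |θ n| * u n) (hx : Summable fun n => |x n| * u n) :
    Summable (fun j => |hatT θ x j| * w j) ∧
      ∑' j, |hatT θ x j| * w j ≤ (∑' n, |θ n| * u n) * ∑' n, |x n| * u n := by
  have norm_eq (y : ℕ → ℝ) : (fun n => ‖|y n| * u n‖) = fun n => |y n| * u n :=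
    funext fun n => Real.norm_of_nonneg (mul_nonneg (abs_nonneg _) (hu n))
  have hcauchy := hasSum_sum_range_mul_of_summable_norm (R := ℝ)
    (norm_eq x ▸ hx) (norm_eq θ ▸ hθ)
  have hle := abs_hatT_mul_le_sum hw hwu θ x
  have hsum : Summable (fun j => |hatT θ x j| * w j) :=
    hcauchy.summable.of_nonneg_of_le (fun j => mul_nonneg (abs_nonneg _) (hw j)) hle
  refine ⟨hsum, ?_⟩
  rw [mul_comm, ← hcauchy.tsum_eq]
  exact hsum.tsum_le_tsum hle hcauchy.summable

end Convolution

lemma finNorm_hatT_le_of_dominated {β : ℕ → ℝ} (hβ : Monotone β) {a : ℕ → ℕ → ℝ}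
    {θ x : ℕ → ℝ} {k m : ℕ} {C : ℝ} (hθ : Summable fun n => |θ n| * finW β (2 * k) n)
    (hdom : ∀ n, finW β (2 * k) n ≤ C * a n m) (hx : InKothe a x) :
    Summable (fun j => |hatT θ x j| * finW β k j) ∧
      finNorm β k (hatT θ x) ≤ (∑' n, |θ n| * finW β (2 * k) n) * C * kNorm a m x := by
  have hxa : Summable fun n => C * (|x n| * a n m) := (hx m).mul_left C
  have hle (n : ℕ) : |x n| * finW β (2 * k) n ≤ C * (|x n| * a n m) := by
    rw [mul_left_comm]; exact mul_le_mul_of_nonneg_left (hdom n) (abs_nonneg _)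
  have hx2k : Summable fun n => |x n| * finW β (2 * k) n :=
    hxa.of_nonneg_of_le (fun n => mul_nonneg (abs_nonneg _) (finW_nonneg β _ n)) hle
  obtain ⟨hsum, hbound⟩ := summable_hatT_mul_and_tsum_le (finW_nonneg β k)
    (finW_nonneg β (2 * k)) (fun _ _ => finW_le_finW_two_mul_sub_mul hβ k) hθ hx2k
  have hx2k_le : ∑' n, |x n| * finW β (2 * k) n ≤ C * kNorm a m x := by
    rw [kNorm, ← tsum_mul_left]
    exact hx2k.tsum_le_tsum hle hxa
  refine ⟨hsum, hbound.trans ?_⟩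
  rw [mul_assoc]
  exact mul_le_mul_of_nonneg_left hx2k_le
    (tsum_nonneg fun n => mul_nonneg (abs_nonneg _) (finW_nonneg β _ n))

lemma tsum_abs_mul_finW_pos {θ : ℕ → ℝ} (hθ : θ 0 ≠ 0) {β : ℕ → ℝ} {k : ℕ}
    (hs : Summable fun n => |θ n| * finW β k n) : 0 < ∑' n, |θ n| * finW β k n :=
  hs.tsum_pos (fun n => mul_nonneg (abs_nonneg _) (finW_nonneg β k n)) 0
    (mul_pos (abs_pos.mpr hθ) (Real.exp_pos _))

lemma inKothe_unitVec (a : ℕ → ℕ → ℝ) (n : ℕ) : InKothe a (unitVec n) := fun _ =>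
  summable_of_ne_finset_zero (s := {n}) fun j hj => by
    simp [unitVec, Finset.mem_singleton.not.mp hj]

lemma kNorm_unitVec (a : ℕ → ℕ → ℝ) (m n : ℕ) : kNorm a m (unitVec n) = a n m := by
  rw [kNorm, tsum_eq_single n fun j hj => by simp [unitVec, hj]]
  simp [unitVec]

lemma hatT_unitVec (θ : ℕ → ℝ) (n j : ℕ) :
    hatT θ (unitVec n) j = if n ≤ j then θ (j - n) else 0 := by
  simp only [hatT, unitVec, mul_ite, mul_one, mul_zero, sum_ite_eq', mem_range,
    Nat.lt_succ_iff]

lemma hatT_unitVec_zero (θ : ℕ → ℝ) : hatT θ (unitVec 0) = θ :=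
  funext fun j => by simp [hatT_unitVec]

lemma abs_mul_finW_le_finNorm_hatT_unitVec {θ β : ℕ → ℝ} {k n : ℕ}
    (hs : Summable fun j => |hatT θ (unitVec n) j| * finW β k j) :
    |θ 0| * finW β k n ≤ finNorm β k (hatT θ (unitVec n)) := by
  simpa [finNorm, hatT_unitVec] using
    hs.le_tsum n fun j _ => mul_nonneg (abs_nonneg _) (finW_nonneg β k j)

theorem stmt3_general (a : ℕ → ℕ → ℝ)
    (β : ℕ → ℝ) (hβm : Monotone β)
    (θ : ℕ → ℝ) (hθ : θ 0 ≠ 0) :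
    ((∀ x, InKothe a x → memFin β (hatT θ x)) ∧
      ∀ k : ℕ, 0 < k → ∃ m, ∃ C > 0, ∀ x, InKothe a x →
        finNorm β k (hatT θ x) ≤ C * kNorm a m x)
    ↔ (memFin β θ ∧
       ∀ k : ℕ, 0 < k → ∃ m, ∃ C > 0, ∀ n, finW β k n ≤ C * a n m) := by
  constructor
  · rintro ⟨hmem, hcont⟩
    refine ⟨hatT_unitVec_zero θ ▸ hmem _ (inKothe_unitVec a 0), fun k hk => ?_⟩
    obtain ⟨m, C, hC, hbound⟩ := hcont k hk
    have hθ0 : 0 < |θ 0| := abs_pos.mpr hθ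
    refine ⟨m, C / |θ 0|, div_pos hC hθ0, fun n => ?_⟩
    have := (abs_mul_finW_le_finNorm_hatT_unitVec (hmem _ (inKothe_unitVec a n) k hk)).trans
      (kNorm_unitVec a m n ▸ hbound _ (inKothe_unitVec a n))
    rw [div_mul_eq_mul_div, le_div_iff₀ hθ0]
    linarith
  · rintro ⟨hθmem, hdom⟩
    have hbound : ∀ k, 0 < k → ∃ m, ∃ C > 0, ∀ x, InKothe a x →
        Summable (fun j => |hatT θ x j| * finW β k j) ∧
          finNorm β k (hatT θ x) ≤ C * kNorm a m x := fun k hk => by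
      obtain ⟨m, C, hC, hdomk⟩ := hdom (2 * k) (by omega)
      have hθ2k := hθmem (2 * k) (by omega)
      exact ⟨m, _, mul_pos (tsum_abs_mul_finW_pos hθ hθ2k) hC,
        fun x hx => finNorm_hatT_le_of_dominated hβm hθ2k hdomk hx⟩
    refine ⟨fun x hx k hk => ?_, fun k hk => ?_⟩ <;> obtain ⟨m, C, hC, h⟩ := hbound k hk
    · exact (h x hx).1
    · exact ⟨m, C, hC, fun x hx => (h x hx).2⟩

/-- `T̂_θ : K(a) → Λ₁(β)` is continuous iff `θ ∈ Λ₁(β)` and for every `k`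
there are `m`, `C > 0` with `e^{-β_n/k} ≤ C a_{n,m}` for all `n`. -/
theorem stmt3 (a : ℕ → ℕ → ℝ) (ha : IsKotheMatrix a)
    (β : ℕ → ℝ) (hβ0 : ∀ n, 0 ≤ β n) (hβm : Monotone β)
    (hβi : Filter.Tendsto β Filter.atTop Filter.atTop)
    (θ : ℕ → ℝ) (hθ : θ 0 ≠ 0) :
    ((∀ x, InKothe a x → memFin β (hatT θ x)) ∧
      ∀ k : ℕ, 0 < k → ∃ m, ∃ C > 0, ∀ x, InKothe a x →
        finNorm β k (hatT θ x) ≤ C * kNorm a m x)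
    ↔ (memFin β θ ∧
       ∀ k : ℕ, 0 < k → ∃ m, ∃ C > 0, ∀ n, finW β k n ≤ C * a n m) :=
  stmt3_general a β hβm θ hθ
end
end

section
/- Let Λ_∞(α) be an infinite type power series space and K(b_{n,k}) a nuclear Köthe space, and θ_0 ≠ 0. The upper triangular Toeplitz operator Ť_θ : Λ_∞(α) → K(b_{n,k}) is compact if and only if θ ∈ (Λ_∞(α))′ and there exists m ∈ ℕ such that for every k ∈ ℕ there is C > 0 with b_{n,k} ≤ C e^{m α_n} for all n ∈ ℕ. -/
open scoped BigOperators
noncomputable section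

/-!
Testing continuity on the unit vectors `e_n` gives `|θ_{n-j}| b_{j,k} ≤ C e^{m α_n}` for `j ≤ n`;
the cases `j = 0` and `j = n` (where `θ_0 ≠ 0`) are the two conditions. Conversely, if
`|θ_i| ≤ C₀ e^{m₀ α_i}` and `b_{n,k} ≤ C e^{m₁ α_n}`, monotonicity of `α` gives
`|(Ť_θ x)_j| e^{m₁ α_j} ≤ C₀ ‖x‖_{m₀+m₁}`, i.e. `Ť_θ` maps `Λ_∞(α)` boundedly into the weighted
`ℓ^∞` space of `e^{m₁ α}`, and nuclearity of `K(b)` turns such a sup-bound into a bound on every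
`‖·‖_k`.
-/

lemma IsKotheMatrix.monotone {a : ℕ → ℕ → ℝ} (ha : IsKotheMatrix a) (n : ℕ) : Monotone (a n) :=
  monotone_nat_of_le_succ (ha.mono n)

lemma IsNuclearKothe.exists_kNorm_le {a : ℕ → ℕ → ℝ} (ha : IsKotheMatrix a)
    (hna : IsNuclearKothe a) {w : ℕ → ℝ} (haw : ∀ k, ∃ C > 0, ∀ n, a n k ≤ C * w n) (k : ℕ) :
    ∃ C > 0, ∀ (y : ℕ → ℝ) (A : ℝ), (∀ n, |y n| * w n ≤ A) →
      Summable (fun n => |y n| * a n k) ∧ kNorm a k y ≤ C * A := by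
  obtain ⟨l, hkl, hS⟩ := hna k
  obtain ⟨Cl, hCl, hal⟩ := haw l
  set S := ∑' n, a n k / a n l
  have hS0 : 0 ≤ S := tsum_nonneg fun n => div_nonneg (ha.nonneg n k) (ha.nonneg n l)
  refine ⟨Cl * (S + 1), by positivity, fun y A hy => ?_⟩
  have hw : ∀ n, 0 ≤ w n := fun n =>
    nonneg_of_mul_nonneg_right ((ha.nonneg n l).trans (hal n)) hCl
  have hA : 0 ≤ A := (mul_nonneg (abs_nonneg _) (hw 0)).trans (hy 0)
  -- `a n k = (a n k / a n l) * a n l`, and the ratios are summable by nuclearity.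
  have hterm : ∀ n, |y n| * a n k ≤ a n k / a n l * (Cl * A) := by
    intro n
    rcases (ha.nonneg n l).eq_or_lt with h0 | hpos
    · have hk0 : a n k = 0 :=
        le_antisymm (h0 ▸ ha.monotone n hkl.le) (ha.nonneg n k)
      simp [hk0]
    · have hl : |y n| * a n l ≤ Cl * A :=
        calc |y n| * a n l ≤ |y n| * (Cl * w n) := by gcongr; exact hal n
          _ = Cl * (|y n| * w n) := by ring
          _ ≤ Cl * A := by gcongr; exact hy n
      calc |y n| * a n k = a n k / a n l * (|y n| * a n l) := by field_simp
        _ ≤ a n k / a n l * (Cl * A) := by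
          gcongr
          exact div_nonneg (ha.nonneg n k) hpos.le
  have hsum : Summable fun n => |y n| * a n k :=
    .of_nonneg_of_le (fun n => mul_nonneg (abs_nonneg _) (ha.nonneg n k)) hterm
      (hS.mul_right _)
  refine ⟨hsum, ?_⟩
  calc kNorm a k y ≤ ∑' n, a n k / a n l * (Cl * A) :=
        hsum.tsum_le_tsum hterm (hS.mul_right _)
    _ = S * (Cl * A) := tsum_mul_right
    _ ≤ (S + 1) * (Cl * A) := by gcongr; linarith
    _ = Cl * (S + 1) * A := by ring

section PowerSeries

variable {α : ℕ → ℝ}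

lemma infW_pos (α : ℕ → ℝ) (m n : ℕ) : 0 < infW α m n := Real.exp_pos _

lemma infW_mono_left (hα0 : ∀ n, 0 ≤ α n) {k l : ℕ} (hkl : k ≤ l) (n : ℕ) :
    infW α k n ≤ infW α l n :=
  Real.exp_le_exp.2 (by gcongr; exact hα0 n)

lemma infW_mul_infW_le (hαm : Monotone α) (m₀ m₁ i j : ℕ) :
    infW α m₀ i * infW α m₁ j ≤ infW α (m₀ + m₁) (j + i) := by
  rw [infW, infW, infW, ← Real.exp_add, Nat.cast_add, add_mul]
  gcongr <;> apply hαm <;> omega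

lemma memInf.summable (hα0 : ∀ n, 0 ≤ α n) {x : ℕ → ℝ} (hx : memInf α x) (k : ℕ) :
    Summable fun n => |x n| * infW α k n :=
  .of_nonneg_of_le (fun n => mul_nonneg (abs_nonneg _) (infW_pos α k n).le)
    (fun n => by gcongr; exact infW_mono_left hα0 k.le_succ n) (hx (k + 1) k.succ_pos)

lemma memInf_unitVec (α : ℕ → ℝ) (n : ℕ) : memInf α (unitVec n) := fun _ _ =>
  summable_of_ne_finset_zero (s := {n}) fun j hj => by
    simp [unitVec, Finset.mem_singleton.not.1 hj]

lemma infNorm_unitVec (α : ℕ → ℝ) (m n : ℕ) : infNorm α m (unitVec n) = infW α m n := by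
  rw [infNorm, tsum_eq_single n fun j hj => by simp [unitVec, hj]]
  simp [unitVec]

lemma abs_checkT_mul_infW_le (hα0 : ∀ n, 0 ≤ α n) (hαm : Monotone α) {θ : ℕ → ℝ} {C₀ : ℝ}
    {m₀ : ℕ} (hθ : ∀ n, |θ n| ≤ C₀ * infW α m₀ n) {x : ℕ → ℝ} (hx : memInf α x) (m j : ℕ) :
    |checkT θ x j| * infW α m j ≤ C₀ * infNorm α (m₀ + m) x := by
  have hC₀ : 0 ≤ C₀ := nonneg_of_mul_nonneg_left ((abs_nonneg _).trans (hθ 0)) (infW_pos α m₀ 0)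
  set g := fun s => |x s| * infW α (m₀ + m) s
  have hg : Summable g := hx.summable hα0 _
  have hw : 0 ≤ infW α m j := (infW_pos α m j).le
  have hterm : ∀ i, |θ i * x (j + i)| * infW α m j ≤ C₀ * g (j + i) := fun i =>
    calc |θ i * x (j + i)| * infW α m j = |θ i| * |x (j + i)| * infW α m j := by rw [abs_mul]
      _ ≤ C₀ * infW α m₀ i * |x (j + i)| * infW α m j := by gcongr; exact hθ i
      _ = C₀ * |x (j + i)| * (infW α m₀ i * infW α m j) := by ring
      _ ≤ C₀ * |x (j + i)| * infW α (m₀ + m) (j + i) := by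
        gcongr; exact infW_mul_infW_le hαm m₀ m i j
      _ = C₀ * g (j + i) := by simp only [g]; ring
  have hsum : Summable fun i => |θ i * x (j + i)| * infW α m j :=
    .of_nonneg_of_le (fun i => mul_nonneg (abs_nonneg _) hw) hterm
      ((hg.comp_injective (add_right_injective j)).mul_left C₀)
  have hsum_abs : Summable fun i => ‖θ i * x (j + i)‖ :=
    (summable_mul_right_iff (infW_pos α m j).ne').1 hsum
  calc |checkT θ x j| * infW α m j ≤ (∑' i, |θ i * x (j + i)|) * infW α m j := by
        gcongr; exact norm_tsum_le_tsum_norm hsum_abs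
    _ = ∑' i, |θ i * x (j + i)| * infW α m j := tsum_mul_right.symm
    _ ≤ ∑' i, C₀ * g (j + i) :=
        hsum.tsum_le_tsum hterm ((hg.comp_injective (add_right_injective j)).mul_left C₀)
    _ ≤ ∑' s, C₀ * g s :=
        tsum_comp_le_tsum_of_inj (hg.mul_left C₀)
          (fun s => mul_nonneg hC₀ (mul_nonneg (abs_nonneg _) (infW_pos α _ s).le))
          (add_right_injective j)
    _ = C₀ * infNorm α (m₀ + m) x := tsum_mul_left

end PowerSeries

section UnitVectors

variable {a : ℕ → ℕ → ℝ}

lemma checkT_unitVec (θ : ℕ → ℝ) (n j : ℕ) :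
    checkT θ (unitVec n) j = if j ≤ n then θ (n - j) else 0 := by
  unfold checkT unitVec
  split_ifs with h
  · rw [tsum_eq_single (n - j) fun i hi => by simp [show j + i ≠ n by omega]]
    simp [Nat.add_sub_cancel' h]
  · simp [show ∀ i, j + i ≠ n by omega]

lemma abs_mul_le_kNorm_checkT_unitVec (ha : IsKotheMatrix a) (θ : ℕ → ℝ) {j n : ℕ}
    (hjn : j ≤ n) (k : ℕ) : |θ (n - j)| * a j k ≤ kNorm a k (checkT θ (unitVec n)) := by
  have hsum : Summable fun i => |checkT θ (unitVec n) i| * a i k :=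
    summable_of_ne_finset_zero (s := Finset.range (n + 1)) fun i hi => by
      simp [checkT_unitVec, show ¬ i ≤ n by simp at hi; omega]
  simpa [kNorm, checkT_unitVec, hjn] using
    hsum.le_tsum j fun i _ => mul_nonneg (abs_nonneg _) (ha.nonneg i k)

lemma abs_mul_le_of_kNorm_checkT_le {α θ : ℕ → ℝ} (ha : IsKotheMatrix a) {k m : ℕ} {C : ℝ}
    (hT : ∀ x, memInf α x → kNorm a k (checkT θ x) ≤ C * infNorm α m x) {j n : ℕ}
    (hjn : j ≤ n) : |θ (n - j)| * a j k ≤ C * infW α m n := by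
  simpa [infNorm_unitVec] using
    (abs_mul_le_kNorm_checkT_unitVec ha θ hjn k).trans (hT _ (memInf_unitVec α n))

end UnitVectors

theorem stmt13_general (α : ℕ → ℝ) (hα0 : ∀ n, 0 ≤ α n) (hαm : Monotone α)
    (b : ℕ → ℕ → ℝ) (hb : IsKotheMatrix b) (hnb : IsNuclearKothe b)
    (θ : ℕ → ℝ) (hθ : θ 0 ≠ 0) :
    ((∀ x, memInf α x → InKothe b (checkT θ x)) ∧
      ∃ m, ∀ k, ∃ C > 0, ∀ x, memInf α x →
        kNorm b k (checkT θ x) ≤ C * infNorm α m x)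
    ↔ ((∃ m, ∃ C > 0, ∀ n, |θ n| ≤ C * infW α m n) ∧
       ∃ m, ∀ k, ∃ C > 0, ∀ n, b n k ≤ C * infW α m n) := by
  constructor
  · rintro ⟨-, m, hT⟩
    refine ⟨⟨m, ?_⟩, m, fun k => ?_⟩
    · obtain ⟨k, hk⟩ := hb.pos 0
      obtain ⟨C, hC, hCT⟩ := hT k
      refine ⟨C / b 0 k, div_pos hC hk, fun n => ?_⟩
      have := abs_mul_le_of_kNorm_checkT_le hb hCT n.zero_le
      rw [div_mul_eq_mul_div, le_div_iff₀ hk]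
      simpa using this
    · obtain ⟨C, hC, hCT⟩ := hT k
      have hθ0 : 0 < |θ 0| := abs_pos.2 hθ
      refine ⟨C / |θ 0|, div_pos hC hθ0, fun n => ?_⟩
      have := abs_mul_le_of_kNorm_checkT_le hb hCT le_rfl (n := n)
      rw [div_mul_eq_mul_div, le_div_iff₀ hθ0]
      simpa [mul_comm] using this
  · rintro ⟨⟨m₀, C₀, hC₀, hθb⟩, m₁, hbb⟩
    have hK := hnb.exists_kNorm_le hb hbb
    have hbound := fun x (hx : memInf α x) => abs_checkT_mul_infW_le hα0 hαm hθb hx m₁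
    refine ⟨fun x hx k => ?_, m₀ + m₁, fun k => ?_⟩
    · obtain ⟨C, -, hC⟩ := hK k
      exact (hC _ _ (hbound x hx)).1
    · obtain ⟨C, hCpos, hC⟩ := hK k
      exact ⟨C * C₀, mul_pos hCpos hC₀, fun x hx =>
        (hC _ _ (hbound x hx)).2.trans_eq (mul_assoc _ _ _).symm⟩

/-- `Ť_θ : Λ_∞(α) → K(b)` (with `K(b)` nuclear) is compact iff
`θ ∈ (Λ_∞(α))'` and there is `m` such that for every `k` there is `C > 0` with
`b_{n,k} ≤ C e^{m α_n}` for all `n`. -/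
theorem stmt13 (α : ℕ → ℝ) (hα0 : ∀ n, 0 ≤ α n) (hαm : Monotone α)
    (hαi : Filter.Tendsto α Filter.atTop Filter.atTop)
    (b : ℕ → ℕ → ℝ) (hb : IsKotheMatrix b) (hnb : IsNuclearKothe b)
    (θ : ℕ → ℝ) (hθ : θ 0 ≠ 0) :
    ((∀ x, memInf α x → InKothe b (checkT θ x)) ∧
      ∃ m, ∀ k, ∃ C > 0, ∀ x, memInf α x →
        kNorm b k (checkT θ x) ≤ C * infNorm α m x)
    ↔ ((∃ m, ∃ C > 0, ∀ n, |θ n| ≤ C * infW α m n) ∧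
       ∃ m, ∀ k, ∃ C > 0, ∀ n, b n k ≤ C * infW α m n) :=
  stmt13_general α hα0 hαm b hb hnb θ hθ
end
end
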